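/- arXiv:1903.07552 — 7 statements merged into one kernel-verified Lean document; each statement's English description precedes it below -/
import Mathlib

section
/- Let K be a compact metric space, a₀ ∈ K, and B : ℕ → K → ℝ̄ a sequence of functions with B_n(a₀) ≤ 0 for all n. Assume that for every a ∈ K with a ≠ a₀ there is an open set U containing a such that inf_{x ∈ U} B_n(x) → +∞ as n → ∞. Then every sequence (x_n) in K satisfying B_n(x_n) ≤ B_n(a₀) for all n converges to a₀. -/
open Filter

/- STATEMENT 2: Deterministic Wald-type consistency argument on a compact
metric space: if `B n a₀ ≤ 0` for every `n` and every `a ≠ a₀` has an open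
neighborhood `U` with `inf_{x ∈ U} B n x → +∞`, then any sequence of
near-minimizers (`B n (x n) ≤ B n a₀`) converges to `a₀`. -/
theorem wald_consistency_deterministic
    {K : Type*} [MetricSpace K] [CompactSpace K] (a₀ : K)
    (B : ℕ → K → EReal) (hB : ∀ n, B n a₀ ≤ 0)
    (hid : ∀ a : K, a ≠ a₀ → ∃ U : Set K, IsOpen U ∧ a ∈ U ∧
      Tendsto (fun n => ⨅ x ∈ U, B n x) atTop (nhds ⊤)) :
    ∀ x : ℕ → K, (∀ n, B n (x n) ≤ B n a₀) → Tendsto x atTop (nhds a₀) := by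
  intro x hx
  rw [Metric.tendsto_atTop]
  intro ε hε
  -- the complement of the ball is compact
  set C : Set K := {a | ¬ dist a a₀ < ε} with hC
  have hCclosed : IsClosed C := by
    have : C = (Metric.ball a₀ ε)ᶜ := by
      ext a; simp [C, Metric.mem_ball]
    rw [this]; exact (Metric.isOpen_ball).isClosed_compl
  have hCcompact : IsCompact C := hCclosed.isCompact
  -- choose neighborhoods
  choose! U hUopen hUmem hUtend using hid
  have hne : ∀ a ∈ C, a ≠ a₀ := by
    intro a ha h; apply ha; rw [h]; simpa using hε
  have hcover : C ⊆ ⋃ a ∈ C, U a := by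
    intro a ha
    exact Set.mem_biUnion ha (hUmem a (hne a ha))
  obtain ⟨t, htC, htfin, hsub⟩ := hCcompact.elim_finite_subcover_image
    (fun a ha => hUopen a (hne a ha)) hcover
  -- eventually all infima are ≥ 1
  have hev : ∀ᶠ n in atTop, ∀ a ∈ t, (1 : EReal) ≤ ⨅ y ∈ U a, B n y := by
    rw [eventually_all_finite htfin]
    intro a ha
    exact (hUtend a (hne a (htC ha))).eventually
      (eventually_ge_nhds (by exact_mod_cast EReal.coe_lt_top 1 : (1 : EReal) < ⊤))
  obtain ⟨N, hN⟩ := hev.exists_forall_of_atTop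
  refine ⟨N, fun n hn => ?_⟩
  by_contra hcon
  have hxC : x n ∈ C := hcon
  obtain ⟨a, ha, hmem⟩ := Set.mem_iUnion₂.mp (hsub hxC)
  have h1 : (1 : EReal) ≤ B n (x n) := by
    calc (1 : EReal) ≤ ⨅ y ∈ U a, B n y := hN n hn a ha
    _ ≤ B n (x n) := iInf₂_le (x n) hmem
  have : (1 : EReal) ≤ 0 := h1.trans ((hx n).trans (hB n))
  exact absurd this (by norm_num)
end

section
/- Let (Ω, 𝓕, P) be a probability space, K a compact metric space, a₀ ∈ K, and B : ℕ → Ω → K → ℝ̄ with B_n(ω)(a₀) ≤ 0 for all n and ω. Assume that for every a ∈ K with a ≠ a₀ there exists an open set U containing a such that for P-almost every ω, inf_{x ∈ U} B_n(ω)(x) → +∞ as n → ∞. Then for P-almost every ω, every sequence (x_n) in K satisfying B_n(ω)(x_n) ≤ B_n(ω)(a₀) for all n converges to a₀. -/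
open Filter MeasureTheory

/- STATEMENT 3: Abstract Wald-type strong consistency theorem: on a compact
metric space `K`, if `B n ω a₀ ≤ 0` always holds and every `a ≠ a₀` has an
open neighborhood `U` such that almost surely `inf_{x ∈ U} B n ω x → +∞`,
then almost surely every sequence of near-minimizers converges to `a₀`. -/
theorem wald_consistency_as
    {Ω : Type*} [MeasurableSpace Ω] (P : Measure Ω) [IsProbabilityMeasure P]
    {K : Type*} [MetricSpace K] [CompactSpace K] (a₀ : K)
    (B : ℕ → Ω → K → EReal) (hB : ∀ n ω, B n ω a₀ ≤ 0)
    (hid : ∀ a : K, a ≠ a₀ → ∃ U : Set K, IsOpen U ∧ a ∈ U ∧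
      ∀ᵐ ω ∂P, Tendsto (fun n => ⨅ x ∈ U, B n ω x) atTop (nhds ⊤)) :
    ∀ᵐ ω ∂P, ∀ x : ℕ → K,
      (∀ n, B n ω (x n) ≤ B n ω a₀) → Tendsto x atTop (nhds a₀) := by
  classical
  choose U hUopen hUmem hUae using hid
  set V : {a : K // a ≠ a₀} → Set K := fun i => U i.1 i.2 with hV
  -- for each k, a finite subcover of the compact set S k
  have key : ∀ k : ℕ, ∃ t : Finset {a : K // a ≠ a₀},
      {a : K | (1 : ℝ) / (k + 1) ≤ dist a a₀} ⊆ ⋃ i ∈ t, V i := by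
    intro k
    have hScomp : IsCompact {a : K | (1 : ℝ) / (k + 1) ≤ dist a a₀} := by
      apply IsClosed.isCompact
      exact isClosed_le continuous_const (continuous_id.dist continuous_const)
    apply hScomp.elim_finite_subcover V (fun i => hUopen i.1 i.2)
    intro a ha
    have hane : a ≠ a₀ := by
      intro h
      simp only [Set.mem_setOf_eq, h, dist_self] at ha
      have : (0 : ℝ) < 1 / (k + 1) := by positivity
      linarith
    exact Set.mem_iUnion.2 ⟨⟨a, hane⟩, hUmem a hane⟩
  choose t ht using key
  have hae : ∀ᵐ ω ∂P, ∀ k : ℕ, ∀ i ∈ t k,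
      Tendsto (fun n => ⨅ x ∈ V i, B n ω x) atTop (nhds ⊤) := by
    rw [ae_all_iff]
    intro k
    simp only [← Finset.mem_coe]
    rw [ae_ball_iff (t k).countable_toSet]
    intro i _
    exact hUae i.1 i.2
  filter_upwards [hae] with ω hω x hx
  rw [Metric.tendsto_atTop]
  intro ε hε
  obtain ⟨k, hk⟩ := exists_nat_one_div_lt hε
  have hev : ∀ᶠ n in atTop, ∀ i ∈ t k, (0 : EReal) < ⨅ x ∈ V i, B n ω x := by
    rw [eventually_all_finset]
    intro i hi
    exact (hω k i hi).eventually (eventually_gt_nhds (by simp))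
  obtain ⟨N, hN⟩ := eventually_atTop.1 hev
  refine ⟨N, fun n hn => ?_⟩
  by_contra hcon
  push_neg at hcon
  have hxn : x n ∈ {a : K | (1 : ℝ) / (k + 1) ≤ dist a a₀} := by
    simp only [Set.mem_setOf_eq]
    calc (1 : ℝ) / (k + 1) ≤ ε := le_of_lt hk
      _ ≤ dist (x n) a₀ := hcon
  obtain ⟨i, hi, hxi⟩ := Set.mem_iUnion₂.1 (ht k hxn)
  have h1 : (⨅ y ∈ V i, B n ω y) ≤ B n ω (x n) := biInf_le _ hxi
  have h2 := (hx n).trans (hB n ω)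
  exact absurd ((hN n hn i hi).trans_le (h1.trans h2)) (by simp)
end

section
/- Let d ≥ 1, let W ⊆ ℝ^d be a compact convex set with nonempty interior, and let M be a nonzero d×d real matrix. Then the Lebesgue measure of the Minkowski sum W + M(W) = {x + M·y : x, y ∈ W} is strictly greater than the Lebesgue measure of W. -/
open MeasureTheory Pointwise

lemma aux_no_translate {d : ℕ} (T : Set (Fin d → ℝ)) (hT : IsCompact T)
    (hTi : (interior T).Nonempty) (v : Fin d → ℝ) (hv : v ≠ 0)
    (h0 : volume ((· + v) '' T \ T) = 0) : False := by
  have himg : interior ((· + v) '' T) = (· + v) '' interior T :=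
    ((Homeomorph.addRight v).image_interior T).symm
  have hsub : (· + v) '' interior T ⊆ interior T := by
    have h1 : interior ((· + v) '' T) \ T = ∅ := by
      by_contra hne
      have hpos : 0 < volume (interior ((· + v) '' T) \ T) :=
        (isOpen_interior.sdiff hT.isClosed).measure_pos volume
          (Set.nonempty_iff_ne_empty.mpr hne)
      have hle : volume (interior ((· + v) '' T) \ T) ≤ 0 :=
        h0 ▸ measure_mono (Set.diff_subset_diff_left interior_subset)
      exact absurd (le_antisymm hle hpos.le) hpos.ne'
    have h2 : interior ((· + v) '' T) ⊆ T := Set.diff_eq_empty.mp h1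
    rw [← himg]
    exact interior_maximal (himg ▸ h2) (himg ▸ isOpen_interior)
  obtain ⟨x₀, hx₀⟩ := hTi
  have key : ∀ n : ℕ, x₀ + (n : ℝ) • v ∈ interior T := by
    intro n
    induction n with
    | zero => simpa using hx₀
    | succ n ih =>
        have h := hsub ⟨_, ih, rfl⟩
        have he : x₀ + (n : ℝ) • v + v = x₀ + ((n + 1 : ℕ) : ℝ) • v := by
          push_cast
          rw [add_smul, one_smul, add_assoc]
        exact he ▸ (show x₀ + (n : ℝ) • v + v ∈ interior T from h)
  obtain ⟨R, hR⟩ := hT.isBounded.exists_norm_le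
  have hv' : 0 < ‖v‖ := norm_pos_iff.mpr hv
  obtain ⟨n, hn⟩ := exists_nat_gt ((R + ‖x₀‖) / ‖v‖)
  have h1 : ‖x₀ + (n : ℝ) • v‖ ≤ R := hR _ (interior_subset (key n))
  have h2 : ‖(n : ℝ) • v‖ = (n : ℝ) * ‖v‖ := by
    rw [norm_smul, Real.norm_natCast]
  have h3 : ‖(n : ℝ) • v‖ ≤ ‖x₀ + (n : ℝ) • v‖ + ‖x₀‖ := by
    have := norm_add_le (x₀ + (n : ℝ) • v) (-x₀)
    simpa [add_comm, add_assoc] using this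
  have h4 : (R + ‖x₀‖) < (n : ℝ) * ‖v‖ := (div_lt_iff₀ hv').mp hn
  nlinarith

theorem volume_lt_volume_add_image_of_ne_zero
    (d : ℕ) (hd : 1 ≤ d) (W : Set (Fin d → ℝ))
    (hWc : IsCompact W) (hWconv : Convex ℝ W) (hWint : (interior W).Nonempty)
    (M : Matrix (Fin d) (Fin d) ℝ) (hM : M ≠ 0) :
    volume W < volume (W + M.mulVec '' W) := by
  by_contra hle
  push_neg at hle
  obtain ⟨x₀, hx₀⟩ := hWint
  obtain ⟨v, hv⟩ : ∃ v, M.mulVec v ≠ 0 := by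
    by_contra h; push_neg at h
    exact hM (by ext i j; simpa [Matrix.mulVec_single] using congrFun (h (Pi.single j 1)) i)
  obtain ⟨r, hr, hball⟩ := Metric.isOpen_iff.mp isOpen_interior x₀ hx₀
  set ε : ℝ := r / (2 * (‖v‖ + 1)) with hε
  have hεpos : 0 < ε := by positivity
  have hx₁ : x₀ + ε • v ∈ W := by
    apply interior_subset; apply hball
    have hd : dist (x₀ + ε • v) x₀ = ε * ‖v‖ := by
      simp [dist_eq_norm, norm_smul, abs_of_pos hεpos]
    rw [Metric.mem_ball, hd, hε]
    rw [div_mul_eq_mul_div, div_lt_iff₀ (by positivity)]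
    nlinarith [norm_nonneg v]
  set a := M.mulVec x₀ with ha
  set b := M.mulVec (x₀ + ε • v) with hb
  have hba : b = a + ε • M.mulVec v := by
    rw [hb, ha, Matrix.mulVec_add, Matrix.mulVec_smul]
  set c : Fin d → ℝ := ε • M.mulVec v with hc
  have hcne : c ≠ 0 := smul_ne_zero hεpos.ne' hv
  set S := W + M.mulVec '' W with hS
  set Ta := (· + a) '' W with hTa
  set Tb := (· + b) '' W with hTb
  have hTaS : Ta ⊆ S := by
    rw [hTa, ← Set.add_singleton]
    exact Set.add_subset_add_left
      (Set.singleton_subset_iff.mpr ⟨x₀, interior_subset hx₀, rfl⟩)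
  have hTbS : Tb ⊆ S := by
    rw [hTb, ← Set.add_singleton]
    exact Set.add_subset_add_left (Set.singleton_subset_iff.mpr ⟨x₀ + ε • v, hx₁, rfl⟩)
  have hTac : IsCompact Ta := hWc.image (continuous_id.add continuous_const)
  have hvolTa : volume Ta = volume W := by
    rw [hTa, Set.image_add_right]; exact measure_preimage_add_right volume _ _
  have hnull : volume (S \ Ta) = 0 := by
    have hfin : volume Ta ≠ ⊤ := by rw [hvolTa]; exact hWc.measure_lt_top.ne
    rw [measure_diff hTaS hTac.isClosed.measurableSet.nullMeasurableSet hfin, hvolTa]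
    exact tsub_eq_zero_of_le hle
  have himTb : (· + c) '' Ta = Tb := by
    rw [hTa, hTb, ← Set.image_comp]
    apply Set.image_congr'
    intro x
    simp only [Function.comp_apply, hba]
    abel
  have hTai : (interior Ta).Nonempty := by
    refine ⟨x₀ + a, ?_⟩
    rw [hTa]
    have : (· + a) '' interior W = interior ((· + a) '' W) :=
      (Homeomorph.addRight a).image_interior W
    rw [← this]
    exact ⟨x₀, hx₀, rfl⟩
  exact aux_no_translate Ta hTac hTai c hcne
    (by rw [himTb]; exact measure_mono_null (Set.diff_subset_diff_left hTbS) hnull)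
end

section
/- Let d ≥ 1, let W ⊆ ℝ^d be a compact convex set with nonempty interior, and let κ > 0. Let u, v : Ω → ℝ^d be independent random vectors on a probability space (Ω, 𝓕, P), each of whose law is absolutely continuous with respect to Lebesgue measure with a density f satisfying f(x) ≥ κ for all x ∈ W and f(x) = 0 for all x ∉ W. Let M be a nonzero d×d real matrix and z ∈ ℝ^d a fixed vector. Then P( M·u + v + z ∉ W ) > 0. -/
/-!
If the residual stayed in `W` almost surely, the open set `{(x, y) | M x + y + z ∉ W}` would be
null for the product of the two laws. Both laws charge every nonempty open subset of `interior W`,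
so `M x + y + z ∈ W` for all `x, y ∈ interior W`. For fixed `x`, translation by `M x + z` then maps
the bounded open set `interior W` into itself, which forces `M x + z = 0`. So `x ↦ M x` is constant
on a nonempty open set, hence `M = 0`.
-/

open MeasureTheory ProbabilityTheory
open scoped Matrix

lemma eq_zero_of_forall_add_mem_of_isBounded {E : Type*} [NormedAddCommGroup E] [NormedSpace ℝ E]
    {S : Set E} (hS : Bornology.IsBounded S) (hne : S.Nonempty) {b : E}
    (hb : ∀ y ∈ S, y + b ∈ S) : b = 0 := by
  obtain ⟨c, hc⟩ := hne
  have hiter : ∀ n : ℕ, c + (n : ℝ) • b ∈ S := by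
    intro n
    induction n with
    | zero => simpa using hc
    | succ n ih => simpa [add_smul, add_assoc] using hb _ ih
  obtain ⟨R, hR⟩ := hS.subset_closedBall c
  have hbound : ∀ n : ℕ, (n : ℝ) * ‖b‖ ≤ R := fun n => by
    simpa [norm_smul, dist_eq_norm] using hR (hiter n)
  by_contra hb0
  obtain ⟨n, hn⟩ := exists_nat_gt (R / ‖b‖)
  have := hbound n
  rw [div_lt_iff₀ (norm_pos_iff.mpr hb0)] at hn
  linarith

lemma LinearMap.eq_zero_of_isOpen_of_forall_eq {E F : Type*} [AddCommGroup E] [TopologicalSpace E]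
    [IsTopologicalAddGroup E] [Module ℝ E] [ContinuousSMul ℝ E] [AddCommGroup F] [Module ℝ F]
    (L : E →ₗ[ℝ] F) {U : Set E} (hU : IsOpen U) {x₀ : E} (hx₀ : x₀ ∈ U)
    (hL : ∀ x ∈ U, L x = L x₀) : L = 0 := by
  have hsub : (· + -x₀) '' U ⊆ (LinearMap.ker L : Set E) := by
    rintro _ ⟨x, hx, rfl⟩
    simp [hL x hx]
  have hopen : IsOpen ((· + -x₀) '' U) := (Homeomorph.addRight (-x₀)).isOpenMap U hU
  have hker := Submodule.eq_top_of_nonempty_interior' (LinearMap.ker L)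
    ⟨0, interior_maximal hsub hopen ⟨x₀, hx₀, add_neg_cancel x₀⟩⟩
  exact LinearMap.ker_eq_top.mp hker

lemma withDensity_ofReal_pos_of_isOpen {α : Type*} [TopologicalSpace α] [MeasurableSpace α]
    [OpensMeasurableSpace α] (μ : Measure α) [μ.IsOpenPosMeasure] {f : α → ℝ} {κ : ℝ}
    (hκ : 0 < κ) {U : Set α} (hU : IsOpen U) (hne : U.Nonempty) (hf : ∀ x ∈ U, κ ≤ f x) :
    0 < μ.withDensity (fun x => ENNReal.ofReal (f x)) U := by
  rw [withDensity_apply _ hU.measurableSet]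
  calc 0 < ENNReal.ofReal κ * μ U :=
        ENNReal.mul_pos (ENNReal.ofReal_pos.mpr hκ).ne' (hU.measure_ne_zero μ hne)
    _ = ∫⁻ _ in U, ENNReal.ofReal κ ∂μ := (setLIntegral_const U _).symm
    _ ≤ ∫⁻ x in U, ENNReal.ofReal (f x) ∂μ :=
        setLIntegral_mono' hU.measurableSet fun x hx => ENNReal.ofReal_le_ofReal (hf x hx)

lemma MeasureTheory.Measure.prod_pos_of_isOpen {α β : Type*} [TopologicalSpace α]
    [MeasurableSpace α] [TopologicalSpace β] [MeasurableSpace β] (μ : Measure α) (ν : Measure β)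
    [SFinite ν]
    {S : Set α} {T : Set β} (hS : IsOpen S) (hT : IsOpen T)
    (hμ : ∀ U, IsOpen U → U.Nonempty → U ⊆ S → 0 < μ U)
    (hν : ∀ V, IsOpen V → V.Nonempty → V ⊆ T → 0 < ν V)
    {O : Set (α × β)} (hO : IsOpen O) (hne : (O ∩ S ×ˢ T).Nonempty) : 0 < μ.prod ν O := by
  obtain ⟨p, hp⟩ := hne
  obtain ⟨U, V, hU, hV, hpU, hpV, hUV⟩ := isOpen_prod_iff.mp (hO.inter (hS.prod hT)) p.1 p.2 hp
  calc 0 < μ U * ν V := ENNReal.mul_pos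
        (hμ U hU ⟨_, hpU⟩ fun x hx => (hUV (Set.mk_mem_prod hx hpV)).2.1).ne'
        (hν V hV ⟨_, hpV⟩ fun y hy => (hUV (Set.mk_mem_prod hpU hy)).2.2).ne'
    _ = μ.prod ν (U ×ˢ V) := (Measure.prod_prod U V).symm
    _ ≤ μ.prod ν O := measure_mono fun q hq => (hUV hq).1

lemma Matrix.eq_zero_of_forall_mulVec_add_add_mem {n : Type*} [Fintype n] {M : Matrix n n ℝ}
    {W : Set (n → ℝ)} (hW : Bornology.IsBounded W) (hint : (interior W).Nonempty) {z : n → ℝ}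
    (hMW : ∀ x ∈ interior W, ∀ y ∈ interior W, M *ᵥ x + y + z ∈ W) : M = 0 := by
  have hfix : ∀ x ∈ interior W, M *ᵥ x + z = 0 := fun x hx =>
    eq_zero_of_forall_add_mem_of_isBounded (hW.subset interior_subset) hint fun y hy => by
      have himage : (· + (M *ᵥ x + z)) '' interior W ⊆ W := by
        rintro _ ⟨y', hy', rfl⟩
        simpa only [add_comm y', add_assoc] using hMW x hx y' hy'
      exact interior_maximal himage ((Homeomorph.addRight _).isOpenMap _ isOpen_interior)
        ⟨y, hy, rfl⟩
  obtain ⟨x₀, hx₀⟩ := hint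
  have hlin : M.mulVecLin = 0 := M.mulVecLin.eq_zero_of_isOpen_of_forall_eq isOpen_interior hx₀
    fun x hx => by
      simp only [Matrix.mulVecLin_apply]
      rw [eq_neg_of_add_eq_zero_left (hfix x hx), eq_neg_of_add_eq_zero_left (hfix x₀ hx₀)]
  classical exact Matrix.toLin'.map_eq_zero_iff.mp (by rw [Matrix.toLin'_apply', hlin])

theorem residual_leaves_W_pos_prob_general
    {Ω : Type*} [MeasurableSpace Ω] (P : Measure Ω) [IsProbabilityMeasure P]
    (d : ℕ) (W : Set (Fin d → ℝ))
    (hWc : IsCompact W) (hWint : (interior W).Nonempty)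
    (κ : ℝ) (hκ : 0 < κ)
    (u v : Ω → Fin d → ℝ) (hu : Measurable u) (hv : Measurable v)
    (huv : IndepFun u v P)
    (fu fv : (Fin d → ℝ) → ℝ)
    (hulaw : P.map u = volume.withDensity fun x => ENNReal.ofReal (fu x))
    (hvlaw : P.map v = volume.withDensity fun x => ENNReal.ofReal (fv x))
    (hfuW : ∀ x ∈ W, κ ≤ fu x)
    (hfvW : ∀ x ∈ W, κ ≤ fv x)
    (M : Matrix (Fin d) (Fin d) ℝ) (hM : M ≠ 0) (z : Fin d → ℝ) :
    0 < P {ω | M.mulVec (u ω) + v ω + z ∉ W} := by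
  set O : Set ((Fin d → ℝ) × (Fin d → ℝ)) := {p | M *ᵥ p.1 + p.2 + z ∉ W}
  have hO : IsOpen O := hWc.isClosed.isOpen_compl.preimage <|
    ((M.mulVecLin.continuous_of_finiteDimensional.comp continuous_fst).add continuous_snd).add
      continuous_const
  have hjoint : P.map (fun ω => (u ω, v ω)) = (P.map u).prod (P.map v) :=
    (indepFun_iff_map_prod_eq_prod_map_map hu.aemeasurable hv.aemeasurable).mp huv
  have hprob : P {ω | M *ᵥ u ω + v ω + z ∉ W} = (P.map u).prod (P.map v) O := by
    rw [← hjoint, Measure.map_apply (hu.prodMk hv) hO.measurableSet]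
    rfl
  have hlaw_pos : ∀ {f : (Fin d → ℝ) → ℝ}, (∀ x ∈ W, κ ≤ f x) → ∀ U, IsOpen U → U.Nonempty →
      U ⊆ interior W → 0 < volume.withDensity (fun x => ENNReal.ofReal (f x)) U :=
    fun hf U hU hne hUW =>
      withDensity_ofReal_pos_of_isOpen volume hκ hU hne fun x hx => hf x (interior_subset (hUW hx))
  rw [hprob]
  refine Measure.prod_pos_of_isOpen _ _ isOpen_interior isOpen_interior
    (hulaw ▸ hlaw_pos hfuW) (hvlaw ▸ hlaw_pos hfvW) hO ?_
  by_contra hempty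
  exact hM <| Matrix.eq_zero_of_forall_mulVec_add_add_mem (z := z) hWc.isBounded hWint
    fun x hx y hy => of_not_not fun hxy => hempty ⟨(x, y), hxy, hx, hy⟩

theorem residual_leaves_W_pos_prob
    {Ω : Type*} [MeasurableSpace Ω] (P : Measure Ω) [IsProbabilityMeasure P]
    (d : ℕ) (hd : 1 ≤ d) (W : Set (Fin d → ℝ))
    (hWc : IsCompact W) (hWconv : Convex ℝ W) (hWint : (interior W).Nonempty)
    (κ : ℝ) (hκ : 0 < κ)
    (u v : Ω → Fin d → ℝ) (hu : Measurable u) (hv : Measurable v)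
    (huv : IndepFun u v P)
    (fu fv : (Fin d → ℝ) → ℝ)
    (hulaw : P.map u = volume.withDensity fun x => ENNReal.ofReal (fu x))
    (hvlaw : P.map v = volume.withDensity fun x => ENNReal.ofReal (fv x))
    (hfuW : ∀ x ∈ W, κ ≤ fu x) (hfu0 : ∀ x ∉ W, fu x = 0)
    (hfvW : ∀ x ∈ W, κ ≤ fv x) (hfv0 : ∀ x ∉ W, fv x = 0)
    (M : Matrix (Fin d) (Fin d) ℝ) (hM : M ≠ 0) (z : Fin d → ℝ) :
    0 < P {ω | M.mulVec (u ω) + v ω + z ∉ W} :=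
  residual_leaves_W_pos_prob_general P d W hWc hWint κ hκ u v hu hv huv fu fv hulaw hvlaw hfuW hfvW
    M hM z
end

section
/- Let d ≥ 1, let W ⊆ ℝ^d be a compact convex set with nonempty interior, and let κ > 0. Let u, v : Ω → ℝ^d be independent random vectors on a probability space (Ω, 𝓕, P), each of whose law is absolutely continuous with respect to Lebesgue measure with a density f satisfying f(x) ≥ κ for all x ∈ W and f(x) = 0 for all x ∉ W. Let M be a nonzero d×d real matrix. Then there exists a constant c > 0 such that P( M·u + v + z ∉ W ) ≥ c for every z ∈ ℝ^d. -/
open MeasureTheory ProbabilityTheory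
set_option maxHeartbeats 1000000

private lemma law_lower_bound {Ω : Type*} [MeasurableSpace Ω] (P : Measure Ω)
    {d : ℕ} (g : Ω → Fin d → ℝ) (hg : Measurable g) (f : (Fin d → ℝ) → ℝ)
    (hlaw : P.map g = volume.withDensity fun x => ENNReal.ofReal (f x))
    {W : Set (Fin d → ℝ)} (hW : MeasurableSet W) {κ : ℝ}
    (hf : ∀ x ∈ W, κ ≤ f x)
    {A : Set (Fin d → ℝ)} (hA : MeasurableSet A) :
    ENNReal.ofReal κ * volume (A ∩ W) ≤ P (g ⁻¹' A) := by
  have h1 : P (g ⁻¹' A) = ∫⁻ x in A, ENNReal.ofReal (f x) := by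
    rw [← Measure.map_apply hg hA, hlaw, withDensity_apply _ hA]
  rw [h1]
  calc ENNReal.ofReal κ * volume (A ∩ W)
      = ∫⁻ _ in A ∩ W, ENNReal.ofReal κ := (setLIntegral_const _ _).symm
    _ = ∫⁻ x, (A ∩ W).indicator (fun _ => ENNReal.ofReal κ) x :=
        (lintegral_indicator (hA.inter hW) _).symm
    _ ≤ ∫⁻ x, (A ∩ W).indicator (fun x => ENNReal.ofReal (f x)) x := by
        refine lintegral_mono fun x => ?_
        by_cases hx : x ∈ A ∩ W
        · simpa [hx] using ENNReal.ofReal_le_ofReal (hf x hx.2)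
        · simp [hx]
    _ = ∫⁻ x in A ∩ W, ENNReal.ofReal (f x) := lintegral_indicator (hA.inter hW) _
    _ ≤ ∫⁻ x in A, ENNReal.ofReal (f x) := lintegral_mono_set Set.inter_subset_left

private lemma law_outside_zero {Ω : Type*} [MeasurableSpace Ω] (P : Measure Ω)
    {d : ℕ} (g : Ω → Fin d → ℝ) (hg : Measurable g) (f : (Fin d → ℝ) → ℝ)
    (hlaw : P.map g = volume.withDensity fun x => ENNReal.ofReal (f x))
    {W : Set (Fin d → ℝ)} (hW : MeasurableSet W)
    (hf0 : ∀ x ∉ W, f x = 0) :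
    P (g ⁻¹' Wᶜ) = 0 := by
  have h1 : P (g ⁻¹' Wᶜ) = ∫⁻ x in Wᶜ, ENNReal.ofReal (f x) := by
    rw [← Measure.map_apply hg hW.compl, hlaw, withDensity_apply _ hW.compl]
  rw [h1, ← lintegral_indicator hW.compl]
  have h2 : ∀ x, Wᶜ.indicator (fun x => ENNReal.ofReal (f x)) x = 0 := by
    intro x
    by_cases hx : x ∈ W
    · exact Set.indicator_of_notMem (by simpa using hx) _
    · rw [Set.indicator_of_mem (by simpa using hx)]
      simp [hf0 x hx]
  simp [h2]

theorem residual_leaves_W_uniform_pos_prob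
    {Ω : Type*} [MeasurableSpace Ω] (P : Measure Ω) [IsProbabilityMeasure P]
    (d : ℕ) (hd : 1 ≤ d) (W : Set (Fin d → ℝ))
    (hWc : IsCompact W) (hWconv : Convex ℝ W) (hWint : (interior W).Nonempty)
    (κ : ℝ) (hκ : 0 < κ)
    (u v : Ω → Fin d → ℝ) (hu : Measurable u) (hv : Measurable v)
    (huv : IndepFun u v P)
    (fu fv : (Fin d → ℝ) → ℝ)
    (hulaw : P.map u = volume.withDensity fun x => ENNReal.ofReal (fu x))
    (hvlaw : P.map v = volume.withDensity fun x => ENNReal.ofReal (fv x))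
    (hfuW : ∀ x ∈ W, κ ≤ fu x) (hfu0 : ∀ x ∉ W, fu x = 0)
    (hfvW : ∀ x ∈ W, κ ≤ fv x) (hfv0 : ∀ x ∉ W, fv x = 0)
    (M : Matrix (Fin d) (Fin d) ℝ) (hM : M ≠ 0) :
    ∃ c : ENNReal, 0 < c ∧
      ∀ z : Fin d → ℝ, c ≤ P {ω | M.mulVec (u ω) + v ω + z ∉ W} := by
  classical
  have hWmeas : MeasurableSet W := hWc.isClosed.measurableSet
  obtain ⟨x0, hx0⟩ := hWint
  have hx0W : x0 ∈ W := interior_subset hx0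
  have hWne : W.Nonempty := ⟨x0, hx0W⟩
  obtain ⟨i, j, hMij⟩ : ∃ i j, M i j ≠ 0 := by
    by_contra h
    push_neg at h
    exact hM (by ext i j; simpa using h i j)
  set Lu : (Fin d → ℝ) → ℝ := fun x => M.mulVec x i with hLudef
  set Lv : (Fin d → ℝ) → ℝ := fun x => x i with hLvdef
  have hLu_cont : Continuous Lu :=
    (continuous_apply i).comp (Matrix.mulVecLin M).continuous_of_finiteDimensional
  have hLv_cont : Continuous Lv := continuous_apply i
  have hLu_lin : ∀ (c c' : ℝ) (x y : Fin d → ℝ),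
      Lu (c • x + c' • y) = c * Lu x + c' * Lu y := by
    intro c c' x y
    simp [hLudef, Matrix.mulVec_add, Matrix.mulVec_smul, smul_eq_mul]
  have hLv_lin : ∀ (c c' : ℝ) (x y : Fin d → ℝ),
      Lv (c • x + c' • y) = c * Lv x + c' * Lv y := by
    intro c c' x y
    simp [hLvdef]
  -- sup and inf of the two linear functionals on W
  have hKu : IsCompact (Lu '' W) := hWc.image hLu_cont
  have hKv : IsCompact (Lv '' W) := hWc.image hLv_cont
  have hKune : (Lu '' W).Nonempty := hWne.image _
  have hKvne : (Lv '' W).Nonempty := hWne.image _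
  set a' := sInf (Lu '' W) with ha'def
  set b' := sSup (Lu '' W) with hb'def
  set a := sInf (Lv '' W) with hadef
  set b := sSup (Lv '' W) with hbdef
  have ha'le : ∀ x ∈ W, a' ≤ Lu x := fun x hx => csInf_le hKu.bddBelow ⟨x, hx, rfl⟩
  have hleb' : ∀ x ∈ W, Lu x ≤ b' := fun x hx => le_csSup hKu.bddAbove ⟨x, hx, rfl⟩
  have hale : ∀ x ∈ W, a ≤ Lv x := fun x hx => csInf_le hKv.bddBelow ⟨x, hx, rfl⟩
  have hleb : ∀ x ∈ W, Lv x ≤ b := fun x hx => le_csSup hKv.bddAbove ⟨x, hx, rfl⟩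
  -- δ := b' - a' > 0
  have hcont0 : Continuous (fun c : ℝ => x0 + c • (Pi.single j 1 : Fin d → ℝ)) := by
    continuity
  obtain ⟨η, hηpos, hball⟩ := Metric.isOpen_iff.1
    (isOpen_interior.preimage hcont0) 0 (by simpa using hx0)
  have hmemW : ∀ c : ℝ, |c| < η → x0 + c • (Pi.single j 1 : Fin d → ℝ) ∈ W := by
    intro c hc
    exact interior_subset (hball (by simpa [Real.dist_eq] using hc))
  have hLuval : ∀ c : ℝ, Lu (x0 + c • (Pi.single j 1 : Fin d → ℝ)) = Lu x0 + c * M i j := by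
    intro c
    simp [hLudef, Matrix.mulVec_add, Matrix.mulVec_smul, Matrix.mulVec_single, smul_eq_mul]
  have habs : |η / 2| < η ∧ |(-(η / 2))| < η := by
    rw [abs_neg, abs_of_pos (by linarith)]
    constructor <;> linarith
  have hδpos : 0 < b' - a' := by
    have h1 := hleb' _ (hmemW (η / 2) habs.1)
    have h2 := ha'le _ (hmemW (η / 2) habs.1)
    have h3 := hleb' _ (hmemW (-(η / 2)) habs.2)
    have h4 := ha'le _ (hmemW (-(η / 2)) habs.2)
    rw [hLuval] at h1 h2 h3 h4
    rcases lt_or_gt_of_ne hMij with hneg | hpos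
    · nlinarith
    · nlinarith
  set δ := b' - a' with hδdef
  -- positive-volume slabs
  have slab : ∀ L : (Fin d → ℝ) → ℝ, Continuous L →
      (∀ (c c' : ℝ) (x y : Fin d → ℝ), L (c • x + c' • y) = c * L x + c' * L y) →
      ∀ r : ℝ, (∃ xs ∈ W, L xs < r) → 0 < volume (L ⁻¹' Set.Iic r ∩ W) := by
    rintro L hLc hLlin r ⟨xs, hxs, hxsr⟩
    set C := |L x0 - L xs| + 1 with hC
    have hCpos : 0 < C := by positivity
    have hrpos : 0 < r - L xs := by linarith
    set θ := min 1 ((r - L xs) / (2 * C)) with hθdef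
    have hθpos : 0 < θ := lt_min one_pos (by positivity)
    have hθ1 : θ ≤ 1 := min_le_left _ _
    set p := θ • x0 + (1 - θ) • xs with hp
    have hpint : p ∈ interior W :=
      hWconv.combo_interior_self_mem_interior hx0 hxs hθpos (by linarith) (by ring)
    have hLp : L p < r := by
      rw [hp, hLlin]
      have h2 : θ ≤ (r - L xs) / (2 * C) := min_le_right _ _
      have h3 : L x0 - L xs ≤ C := by
        rw [hC]; have := le_abs_self (L x0 - L xs); linarith
      have h4 : θ * (L x0 - L xs) ≤ θ * C := by nlinarith
      have h5 : θ * C ≤ (r - L xs) / (2 * C) * C := by nlinarith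
      have h6 : (r - L xs) / (2 * C) * C = (r - L xs) / 2 := by field_simp
      nlinarith
    have hopen2 : IsOpen (L ⁻¹' Set.Iio r ∩ interior W) :=
      (isOpen_Iio.preimage hLc).inter isOpen_interior
    have hne2 : (L ⁻¹' Set.Iio r ∩ interior W).Nonempty := ⟨p, hLp, hpint⟩
    refine lt_of_lt_of_le (hopen2.measure_pos volume hne2) (measure_mono ?_)
    rintro x ⟨h1, h2⟩
    have h1' : L x < r := h1
    exact ⟨show L x ≤ r from h1'.le, interior_subset h2⟩
  -- the four half-space events
  set Aul := Lu ⁻¹' Set.Iic (a' + δ / 8) with hAuldef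
  set Auh := Lu ⁻¹' Set.Ici (b' - δ / 8) with hAuhdef
  set Avl := Lv ⁻¹' Set.Iic (a + δ / 8) with hAvldef
  set Avh := Lv ⁻¹' Set.Ici (b - δ / 8) with hAvhdef
  have hAulm : MeasurableSet Aul := hLu_cont.measurable measurableSet_Iic
  have hAuhm : MeasurableSet Auh := hLu_cont.measurable measurableSet_Ici
  have hAvlm : MeasurableSet Avl := hLv_cont.measurable measurableSet_Iic
  have hAvhm : MeasurableSet Avh := hLv_cont.measurable measurableSet_Ici
  -- attainment of extrema
  obtain ⟨xa', hxa'W, hxa'⟩ : ∃ x ∈ W, Lu x = a' := by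
    obtain ⟨x, hx1, hx2⟩ := hKu.sInf_mem hKune; exact ⟨x, hx1, hx2⟩
  obtain ⟨xb', hxb'W, hxb'⟩ : ∃ x ∈ W, Lu x = b' := by
    obtain ⟨x, hx1, hx2⟩ := hKu.sSup_mem hKune; exact ⟨x, hx1, hx2⟩
  obtain ⟨xa, hxaW, hxa⟩ : ∃ x ∈ W, Lv x = a := by
    obtain ⟨x, hx1, hx2⟩ := hKv.sInf_mem hKvne; exact ⟨x, hx1, hx2⟩
  obtain ⟨xb, hxbW, hxb⟩ : ∃ x ∈ W, Lv x = b := by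
    obtain ⟨x, hx1, hx2⟩ := hKv.sSup_mem hKvne; exact ⟨x, hx1, hx2⟩
  -- positive volume of all four slabs
  have hvul : 0 < volume (Aul ∩ W) :=
    slab Lu hLu_cont hLu_lin _ ⟨xa', hxa'W, by rw [hxa']; linarith⟩
  have hvvl : 0 < volume (Avl ∩ W) :=
    slab Lv hLv_cont hLv_lin _ ⟨xa, hxaW, by rw [hxa]; linarith⟩
  have hvuh : 0 < volume (Auh ∩ W) := by
    have h := slab (fun x => -Lu x) hLu_cont.neg
      (by intro c c' x y; show -Lu _ = c * -Lu x + c' * -Lu y; rw [hLu_lin]; ring)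
      (-(b' - δ / 8))
      ⟨xb', hxb'W, show -Lu xb' < -(b' - δ / 8) by rw [hxb']; linarith⟩
    have hset : (fun x => -Lu x) ⁻¹' Set.Iic (-(b' - δ / 8)) ∩ W = Auh ∩ W := by
      ext x
      constructor
      · rintro ⟨h1, h2⟩
        have h1' : -Lu x ≤ -(b' - δ / 8) := h1
        exact ⟨show b' - δ / 8 ≤ Lu x by linarith, h2⟩
      · rintro ⟨h1, h2⟩
        have h1' : b' - δ / 8 ≤ Lu x := h1
        exact ⟨show -Lu x ≤ -(b' - δ / 8) by linarith, h2⟩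
    rwa [hset] at h
  have hvvh : 0 < volume (Avh ∩ W) := by
    have h := slab (fun x => -Lv x) hLv_cont.neg
      (by intro c c' x y; show -Lv _ = c * -Lv x + c' * -Lv y; rw [hLv_lin]; ring)
      (-(b - δ / 8))
      ⟨xb, hxbW, show -Lv xb < -(b - δ / 8) by rw [hxb]; linarith⟩
    have hset : (fun x => -Lv x) ⁻¹' Set.Iic (-(b - δ / 8)) ∩ W = Avh ∩ W := by
      ext x
      constructor
      · rintro ⟨h1, h2⟩
        have h1' : -Lv x ≤ -(b - δ / 8) := h1
        exact ⟨show b - δ / 8 ≤ Lv x by linarith, h2⟩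
      · rintro ⟨h1, h2⟩
        have h1' : b - δ / 8 ≤ Lv x := h1
        exact ⟨show -Lv x ≤ -(b - δ / 8) by linarith, h2⟩
    rwa [hset] at h
  -- probabilities of preimage events
  have hp1 : 0 < P (u ⁻¹' Aul) :=
    lt_of_lt_of_le (ENNReal.mul_pos (by simp [ENNReal.ofReal_pos, hκ]) hvul.ne')
      (law_lower_bound P u hu fu hulaw hWmeas hfuW hAulm)
  have hp2 : 0 < P (v ⁻¹' Avl) :=
    lt_of_lt_of_le (ENNReal.mul_pos (by simp [ENNReal.ofReal_pos, hκ]) hvvl.ne')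
      (law_lower_bound P v hv fv hvlaw hWmeas hfvW hAvlm)
  have hp3 : 0 < P (u ⁻¹' Auh) :=
    lt_of_lt_of_le (ENNReal.mul_pos (by simp [ENNReal.ofReal_pos, hκ]) hvuh.ne')
      (law_lower_bound P u hu fu hulaw hWmeas hfuW hAuhm)
  have hp4 : 0 < P (v ⁻¹' Avh) :=
    lt_of_lt_of_le (ENNReal.mul_pos (by simp [ENNReal.ofReal_pos, hκ]) hvvh.ne')
      (law_lower_bound P v hv fv hvlaw hWmeas hfvW hAvhm)
  have hu0 : P (u ⁻¹' Wᶜ) = 0 := law_outside_zero P u hu fu hulaw hWmeas hfu0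
  have hv0 : P (v ⁻¹' Wᶜ) = 0 := law_outside_zero P v hv fv hvlaw hWmeas hfv0
  refine ⟨min (P (u ⁻¹' Aul) * P (v ⁻¹' Avl)) (P (u ⁻¹' Auh) * P (v ⁻¹' Avh)),
    lt_min (ENNReal.mul_pos hp1.ne' hp2.ne') (ENNReal.mul_pos hp3.ne' hp4.ne'), ?_⟩
  intro z
  -- the key inclusion machinery
  have key : ∀ Au Av : Set (Fin d → ℝ), MeasurableSet Au → MeasurableSet Av →
      (∀ ω, u ω ∈ Au → v ω ∈ Av → u ω ∈ W → v ω ∈ W →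
        M.mulVec (u ω) + v ω + z ∉ W) →
      P (u ⁻¹' Au) * P (v ⁻¹' Av) ≤ P {ω | M.mulVec (u ω) + v ω + z ∉ W} := by
    intro Au Av hAu hAv hincl
    rw [← huv.measure_inter_preimage_eq_mul _ _ hAu hAv]
    calc P (u ⁻¹' Au ∩ v ⁻¹' Av)
        ≤ P ((u ⁻¹' Au ∩ v ⁻¹' Av ∩ (u ⁻¹' W ∩ v ⁻¹' W)) ∪ (u ⁻¹' Wᶜ ∪ v ⁻¹' Wᶜ)) := by
          refine measure_mono fun ω hω => ?_
          by_cases h1 : u ω ∈ W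
          · by_cases h2 : v ω ∈ W
            · exact Or.inl ⟨hω, h1, h2⟩
            · exact Or.inr (Or.inr h2)
          · exact Or.inr (Or.inl h1)
      _ ≤ P (u ⁻¹' Au ∩ v ⁻¹' Av ∩ (u ⁻¹' W ∩ v ⁻¹' W)) + P (u ⁻¹' Wᶜ ∪ v ⁻¹' Wᶜ) :=
          measure_union_le _ _
      _ = P (u ⁻¹' Au ∩ v ⁻¹' Av ∩ (u ⁻¹' W ∩ v ⁻¹' W)) := by
          rw [measure_union_null hu0 hv0, add_zero]
      _ ≤ P {ω | M.mulVec (u ω) + v ω + z ∉ W} := by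
          refine measure_mono fun ω hω => ?_
          exact hincl ω hω.1.1 hω.1.2 hω.2.1 hω.2.2
  have hLsum : ∀ ω, Lv (M.mulVec (u ω) + v ω + z) = Lu (u ω) + Lv (v ω) + Lv z := by
    intro ω; simp [hLudef, hLvdef]
  by_cases hcase : a' + a + δ / 4 + Lv z < a
  · refine le_trans (min_le_left _ _) (key Aul Avl hAulm hAvlm ?_)
    intro ω hω1 hω2 hω3 hω4 hmem
    have h1 : Lu (u ω) ≤ a' + δ / 8 := hω1
    have h2 : Lv (v ω) ≤ a + δ / 8 := hω2
    have h3 := hale _ hmem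
    rw [hLsum ω] at h3
    linarith
  · have hcase2 : b < b' + b - δ / 4 + Lv z := by
      push_neg at hcase
      by_contra h
      push_neg at h
      have : δ ≤ δ / 2 := by linarith [hδdef]
      linarith
    refine le_trans (min_le_right _ _) (key Auh Avh hAuhm hAvhm ?_)
    intro ω hω1 hω2 hω3 hω4 hmem
    have h1 : b' - δ / 8 ≤ Lu (u ω) := hω1
    have h2 : b - δ / 8 ≤ Lv (v ω) := hω2
    have h3 := hleb _ hmem
    rw [hLsum ω] at h3
    linarith
end

section
/- Let d ≥ 1, let W ⊆ ℝ^d be a compact convex set with nonempty interior, and let κ > 0. Let (w_t)_{t≥0} be an i.i.d. sequence of random vectors on a probability space (Ω, 𝓕, P) whose common law has a density f with f(x) ≥ κ for x ∈ W and f(x) = 0 for x ∉ W. Let M be a nonzero d×d real matrix, and let (Z_k)_{k≥0} be random vectors in ℝ^d such that Z_0 is constant and, for each k ≥ 1, Z_k is measurable with respect to the σ-algebra generated by w_0, …, w_{2k−1}. Then, P-almost surely, the set { k ∈ ℕ : M·w_{2k} + w_{2k+1} + Z_k ∉ W } is infinite. -/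
/-!
Choose a functional `ℓ` with `ℓ ∘ M ≠ 0`. A fit at round `k` forces
`ℓ (M w₂ₖ) + ℓ w₂ₖ₊₁ + ℓ Zₖ` into the compact interval `ℓ '' W`. Because the law of the noise
charges every open set meeting the convex body `W`, the sum `ℓ (M x) + ℓ y` of two independent
draws puts positive mass near both ends of an interval strictly longer than `ℓ '' W`; so, whatever
the value of `Zₖ`, a round fits with probability at most `1 - δ` for one `δ > 0`. The pair
`(w₂ₖ, w₂ₖ₊₁)` is independent of `σ(w₀, …, w₂ₖ₋₁)`, which determines `Zₖ` and the earlier rounds,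
so `m` consecutive fits have probability at most `(1 - δ) ^ m`, and almost surely fits do not
occur from some round on.
-/

open MeasureTheory ProbabilityTheory Filter Set
open scoped ENNReal Topology

section ConditionalBorelCantelli

variable {Ω : Type*} {mΩ : MeasurableSpace Ω} {P : Measure Ω}
  {ℱ : ℕ → MeasurableSpace Ω} {G : ℕ → Set Ω} {r : ℝ≥0∞}

lemma measure_biInter_lt_le_pow_mul (hℱ : Monotone ℱ)
    (hG : ∀ k, MeasurableSet[ℱ (k + 1)] (G k))
    (hstep : ∀ k B, MeasurableSet[ℱ k] B → P (B ∩ G k) ≤ r * P B) (n m : ℕ) :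
    P (⋂ k < m, G (n + k)) ≤ r ^ m * P univ := by
  induction m with
  | zero => simp
  | succ m ih =>
    have hmeas : MeasurableSet[ℱ (n + m)] (⋂ k < m, G (n + k)) :=
      .iInter fun k => .iInter fun hk => hℱ (by omega) _ (hG (n + k))
    calc P (⋂ k < m + 1, G (n + k)) = P ((⋂ k < m, G (n + k)) ∩ G (n + m)) := by
          rw [biInter_lt_succ]
      _ ≤ r * P (⋂ k < m, G (n + k)) := hstep _ _ hmeas
      _ ≤ r * (r ^ m * P univ) := by gcongr
      _ = r ^ (m + 1) * P univ := by ring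

theorem ae_infinite_setOf_notMem [IsFiniteMeasure P] (hℱ : Monotone ℱ)
    (hG : ∀ k, MeasurableSet[ℱ (k + 1)] (G k)) (hr : r < 1)
    (hstep : ∀ k B, MeasurableSet[ℱ k] B → P (B ∩ G k) ≤ r * P B) :
    ∀ᵐ ω ∂P, {k | ω ∉ G k}.Infinite := by
  have hlim : Tendsto (fun m => r ^ m * P univ) atTop (𝓝 0) := by
    simpa using ENNReal.Tendsto.mul_const (ENNReal.tendsto_pow_atTop_nhds_zero_of_lt_one hr)
      (.inr (measure_ne_top P univ))
  have htail : ∀ n, P (⋂ k, G (n + k)) = 0 := fun n =>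
    le_antisymm (ge_of_tendsto' hlim fun m => (measure_mono fun ω hω =>
      mem_iInter₂.2 fun k _ => mem_iInter.1 hω k).trans
        (measure_biInter_lt_le_pow_mul hℱ hG hstep n m)) zero_le
  rw [ae_iff]
  refine measure_mono_null (fun ω hω => ?_) (measure_iUnion_null htail)
  obtain ⟨n, hn⟩ := eventually_atTop.1
    (not_frequently.1 (mt Nat.frequently_atTop_iff_infinite.1 hω))
  exact mem_iUnion.2 ⟨n, mem_iInter.2 fun k => not_not.1 (hn (n + k) (by omega))⟩

end ConditionalBorelCantelli

section IndependentStep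

variable {Ω α β : Type*} {m mΩ : MeasurableSpace Ω} [MeasurableSpace α] [MeasurableSpace β]
  {P : Measure Ω} [IsFiniteMeasure P]

lemma measure_inter_preimage_le_of_indep (hm : m ≤ mΩ) {Y : Ω → α}
    (hY : Measurable[m] Y) {V : Ω → β} (hV : Measurable V)
    (hindep : Indep m (MeasurableSpace.comap V inferInstance) P)
    {S : Set (α × β)} (hS : MeasurableSet S) {r : ℝ≥0∞}
    (hr : ∀ a, P.map V (Prod.mk a ⁻¹' S) ≤ r) {B : Set Ω} (hB : MeasurableSet[m] B) :
    P (B ∩ {ω | (Y ω, V ω) ∈ S}) ≤ r * P B := by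
  -- Recording `ω ∈ B` next to `Y` turns the event into a preimage under an `m`-measurable map.
  set X : Ω → α × Prop := fun ω => (Y ω, ω ∈ B)
  have hXm : Measurable[m] X := hY.prodMk (@measurableSet_setOfPred _ m _ |>.1 hB)
  have hX : Measurable X := hXm.mono hm le_rfl
  have hXV : IndepFun X V P :=
    (IndepFun_iff_Indep X V P).2 (indep_of_indep_of_le_left hindep hXm.comap_le)
  set C : Set (α × Prop) := {a | a.2}
  have hC : MeasurableSet C := measurableSet_setOfPred.2 measurable_snd
  set T : Set ((α × Prop) × β) := {q | q.1.2 ∧ (q.1.1, q.2) ∈ S}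
  have hT : MeasurableSet T := (measurableSet_setOfPred.2 measurable_fst.snd).inter
    (hS.preimage (measurable_fst.fst.prodMk measurable_snd))
  have hsection : ∀ a, P.map V (Prod.mk a ⁻¹' T) ≤ C.indicator (fun _ => r) a := by
    rintro ⟨y, b⟩
    by_cases hb : b
    · rw [indicator_of_mem (show (y, b) ∈ C from hb)]
      convert hr y using 2
      ext; simp [T, hb]
    · rw [indicator_of_notMem (show (y, b) ∉ C from hb)]
      simp [T, hb]
  calc P (B ∩ {ω | (Y ω, V ω) ∈ S}) = P.map (fun ω => (X ω, V ω)) T := by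
        rw [Measure.map_apply (hX.prodMk hV) hT]; rfl
    _ = ∫⁻ a, P.map V (Prod.mk a ⁻¹' T) ∂(P.map X) := by
        rw [(indepFun_iff_map_prod_eq_prod_map_map hX.aemeasurable hV.aemeasurable).1 hXV,
          Measure.prod_apply hT]
    _ ≤ ∫⁻ a, C.indicator (fun _ => r) a ∂(P.map X) := lintegral_mono hsection
    _ = r * P B := by
        rw [lintegral_indicator_const hC, Measure.map_apply hX hC]; rfl

end IndependentStep

section Past

variable {Ω β : Type*} {mΩ : MeasurableSpace Ω} [MeasurableSpace β] {w : ℕ → Ω → β}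

abbrev pastSigma (w : ℕ → Ω → β) (n : ℕ) : MeasurableSpace Ω :=
  ⨆ i ∈ Finset.range n, MeasurableSpace.comap (w i) inferInstance

lemma pastSigma_mono : Monotone (pastSigma w) := fun _ _ hab =>
  biSup_mono fun _ hi => Finset.mem_range.2 ((Finset.mem_range.1 hi).trans_le hab)

lemma pastSigma_le (hw : ∀ i, Measurable (w i)) (n : ℕ) : pastSigma w n ≤ mΩ :=
  iSup₂_le fun i _ => (hw i).comap_le

lemma measurable_pastSigma {i n : ℕ} (h : i < n) : Measurable[pastSigma w n] (w i) :=
  measurable_iff_comap_le.2 <|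
    le_biSup (fun i => MeasurableSpace.comap (w i) inferInstance) (Finset.mem_range.2 h)

variable {α : Type*} [MeasurableSpace α] {P : Measure Ω} [IsProbabilityMeasure P]

lemma measure_inter_mem_le_of_iIndepFun (hw : ∀ i, Measurable (w i)) (hindep : iIndepFun w P)
    {ν : Measure β} (hlaw : ∀ i, P.map (w i) = ν) (n : ℕ) {Y : Ω → α}
    (hY : Measurable[pastSigma w n] Y) {S : Set (α × β × β)} (hS : MeasurableSet S)
    {r : ℝ≥0∞} (hr : ∀ a, (ν.prod ν) (Prod.mk a ⁻¹' S) ≤ r) {B : Set Ω}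
    (hB : MeasurableSet[pastSigma w n] B) :
    P (B ∩ {ω | (Y ω, w n ω, w (n + 1) ω) ∈ S}) ≤ r * P B := by
  have hnext : Disjoint (↑(Finset.range n) : Set ℕ) {n, n + 1} := by
    simp only [Set.disjoint_left, Finset.coe_range, mem_Iio, mem_insert_iff, mem_singleton_iff]
    omega
  have hpast_indep := indep_iSup_of_disjoint (fun i => (hw i).comap_le) hindep hnext
  have hnext_meas : ∀ i ∈ ({n, n + 1} : Set ℕ),
      Measurable[⨆ j ∈ ({n, n + 1} : Set ℕ), MeasurableSpace.comap (w j) inferInstance] (w i) :=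
    fun i hi => measurable_iff_comap_le.2 <|
      le_biSup (fun j => MeasurableSpace.comap (w j) inferInstance) hi
  have hpair := (hnext_meas n (by simp)).prodMk (hnext_meas (n + 1) (by simp))
  have hlaw_pair : P.map (fun ω => (w n ω, w (n + 1) ω)) = ν.prod ν := by
    rw [(indepFun_iff_map_prod_eq_prod_map_map (hw n).aemeasurable
      (hw (n + 1)).aemeasurable).1 (hindep.indepFun (by omega)), hlaw, hlaw]
  exact measure_inter_preimage_le_of_indep (pastSigma_le hw n) hY ((hw n).prodMk (hw (n + 1)))
    (indep_of_indep_of_le_right hpast_indep hpair.comap_le) hS (hlaw_pair ▸ hr) hB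

end Past

section Geometry

variable {E : Type*} [NormedAddCommGroup E] [NormedSpace ℝ E] {W : Set E}

lemma withDensity_pos_of_isOpen [MeasurableSpace E] [BorelSpace E] (μ : Measure E)
    [μ.IsOpenPosMeasure] (hW : Convex ℝ W) (hWint : (interior W).Nonempty) {κ : ℝ} (hκ : 0 < κ)
    {f : E → ℝ} (hf : ∀ x ∈ W, κ ≤ f x) {U : Set E} (hU : IsOpen U) (hUW : (U ∩ W).Nonempty) :
    0 < μ.withDensity (fun x => ENNReal.ofReal (f x)) U := by
  obtain ⟨x, hxU, hxW⟩ := hUW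
  have hx : x ∈ closure (interior W) := by
    rw [hW.closure_interior_eq_closure_of_nonempty_interior hWint]
    exact subset_closure hxW
  set s := U ∩ interior W
  have hs : IsOpen s := hU.inter isOpen_interior
  calc (0 : ℝ≥0∞) < ∫⁻ _ in s, ENNReal.ofReal κ ∂μ := by
        rw [setLIntegral_const]
        exact ENNReal.mul_pos (by simpa using hκ)
          (hs.measure_pos μ (mem_closure_iff.1 hx U hU hxU)).ne'
    _ ≤ ∫⁻ x in s, ENNReal.ofReal (f x) ∂μ :=
        setLIntegral_mono' hs.measurableSet fun x hx =>
          ENNReal.ofReal_le_ofReal (hf x (interior_subset hx.2))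
    _ = μ.withDensity (fun x => ENNReal.ofReal (f x)) s :=
        (withDensity_apply _ hs.measurableSet).symm
    _ ≤ μ.withDensity (fun x => ENNReal.ofReal (f x)) U := measure_mono inter_subset_left

lemma exists_lt_of_interior_nonempty (hWint : (interior W).Nonempty) {ψ : StrongDual ℝ E}
    (hψ : ψ ≠ 0) : ∃ x ∈ W, ∃ y ∈ W, ψ x < ψ y := by
  obtain ⟨x, hx⟩ := hWint
  obtain ⟨_, hlt, y, hy, rfl⟩ := Eventually.exists_gt
    ((ψ.isOpenMap_of_ne_zero hψ).image_mem_nhds (isOpen_interior.mem_nhds hx))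
  exact ⟨x, interior_subset hx, y, interior_subset hy, hlt⟩

end Geometry

lemma exists_forall_measure_add_mem_Icc_le {α β : Type*} [MeasurableSpace α] [MeasurableSpace β]
    (μ : Measure α) (ν : Measure β) [IsProbabilityMeasure μ] [IsProbabilityMeasure ν]
    {ψ : α → ℝ} {φ : β → ℝ} (hψ : Measurable ψ) (hφ : Measurable φ) {a₁ a₂ b₁ b₂ ε : ℝ}
    (hε : 4 * ε ≤ a₂ - a₁) (h₁ : 0 < μ {x | ψ x < a₁ + ε}) (h₂ : 0 < μ {x | a₂ - ε < ψ x})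
    (h₃ : 0 < ν {y | φ y < b₁ + ε}) (h₄ : 0 < ν {y | b₂ - ε < φ y}) :
    ∃ δ > 0, ∀ c, (μ.prod ν) {p | ψ p.1 + φ p.2 + c ∈ Icc b₁ b₂} ≤ 1 - δ := by
  refine ⟨min (μ {x | ψ x < a₁ + ε} * ν {y | φ y < b₁ + ε})
    (μ {x | a₂ - ε < ψ x} * ν {y | b₂ - ε < φ y}),
    lt_min (ENNReal.mul_pos h₁.ne' h₃.ne') (ENNReal.mul_pos h₂.ne' h₄.ne'), fun c => ?_⟩
  have hmiss : ∀ s t, MeasurableSet s → MeasurableSet t →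
      (∀ p ∈ s ×ˢ t, ψ p.1 + φ p.2 + c ∉ Icc b₁ b₂) →
      (μ.prod ν) {p | ψ p.1 + φ p.2 + c ∈ Icc b₁ b₂} ≤ 1 - μ s * ν t := fun s t hs ht hst => by
    rw [← Measure.prod_prod, ← prob_compl_eq_one_sub (hs.prod ht)]
    exact measure_mono fun p hp hst' => hst p hst' hp
  -- For small `c` the sum stays below `b₁` on the first rectangle, otherwise it exceeds `b₂` on
  -- the second; `hε` is exactly what makes the two cases cover every `c`.
  rcases le_or_gt c (-a₁ - 2 * ε) with hc | hc
  · refine (hmiss _ _ (measurableSet_lt hψ measurable_const)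
      (measurableSet_lt hφ measurable_const) ?_).trans (tsub_le_tsub_left (min_le_left _ _) 1)
    rintro p ⟨hp₁, hp₂⟩ ⟨hlo, -⟩
    simp only [mem_ofPred_eq] at hp₁ hp₂
    linarith
  · refine (hmiss _ _ (measurableSet_lt measurable_const hψ)
      (measurableSet_lt measurable_const hφ) ?_).trans (tsub_le_tsub_left (min_le_right _ _) 1)
    rintro p ⟨hp₁, hp₂⟩ ⟨-, hhi⟩
    simp only [mem_ofPred_eq] at hp₁ hp₂
    linarith

lemma exists_forall_measure_prod_setOf_add_mem_le {E : Type*} [NormedAddCommGroup E]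
    [NormedSpace ℝ E] [MeasurableSpace E] [BorelSpace E] (μ ν : Measure E)
    [IsProbabilityMeasure μ] [IsProbabilityMeasure ν] {W : Set E} (hWc : IsCompact W)
    (hWint : (interior W).Nonempty) (hμ : ∀ U, IsOpen U → (U ∩ W).Nonempty → 0 < μ U)
    (hν : ∀ U, IsOpen U → (U ∩ W).Nonempty → 0 < ν U) {T : E →L[ℝ] E} (hT : T ≠ 0) :
    ∃ δ > 0, ∀ z, (μ.prod ν) {p | T p.1 + p.2 + z ∈ W} ≤ 1 - δ := by
  obtain ⟨v, hv⟩ : ∃ v, T v ≠ 0 := by simpa using DFunLike.ne_iff.1 hT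
  obtain ⟨ℓ, hℓ⟩ := SeparatingDual.exists_ne_zero (R := ℝ) hv
  set ψ := ℓ.comp T
  obtain ⟨x₁, hx₁, x₂, hx₂, hlt⟩ := exists_lt_of_interior_nonempty hWint (ψ := ψ)
    fun h => hℓ (by simpa [ψ] using DFunLike.congr_fun h v)
  have hWne : W.Nonempty := hWint.mono interior_subset
  obtain ⟨y₁, hy₁, hmin⟩ := hWc.exists_isMinOn hWne ℓ.continuous.continuousOn
  obtain ⟨y₂, hy₂, hmax⟩ := hWc.exists_isMaxOn hWne ℓ.continuous.continuousOn
  set ε := (ψ x₂ - ψ x₁) / 4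
  have hε : 0 < ε := div_pos (sub_pos.2 hlt) four_pos
  have hpos : ∀ ρ : Measure E, (∀ U, IsOpen U → (U ∩ W).Nonempty → 0 < ρ U) →
      ∀ g : StrongDual ℝ E, ∀ x ∈ W,
        0 < ρ {y | g y < g x + ε} ∧ 0 < ρ {y | g x - ε < g y} := fun ρ hρ g x hx =>
    ⟨hρ _ (isOpen_lt g.continuous continuous_const) ⟨x, lt_add_of_pos_right _ hε, hx⟩,
      hρ _ (isOpen_lt continuous_const g.continuous) ⟨x, sub_lt_self _ hε, hx⟩⟩
  obtain ⟨δ, hδ, hbound⟩ := exists_forall_measure_add_mem_Icc_le μ ν ψ.continuous.measurable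
    ℓ.continuous.measurable (ε := ε) (mul_div_cancel₀ _ four_ne_zero).le
    (hpos μ hμ ψ x₁ hx₁).1 (hpos μ hμ ψ x₂ hx₂).2 (hpos ν hν ℓ y₁ hy₁).1 (hpos ν hν ℓ y₂ hy₂).2
  refine ⟨δ, hδ, fun z => (measure_mono fun p hp => ?_).trans (hbound (ℓ z))⟩
  have h₁ := hmin hp
  have h₂ := hmax hp
  simp only [mem_ofPred_eq, map_add] at h₁ h₂
  exact ⟨h₁, h₂⟩

theorem residual_misfits_infinitely_often_general
    {Ω : Type*} [MeasurableSpace Ω] (P : Measure Ω) [IsProbabilityMeasure P]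
    (d : ℕ) (W : Set (Fin d → ℝ))
    (hWc : IsCompact W) (hWconv : Convex ℝ W) (hWint : (interior W).Nonempty)
    (κ : ℝ) (hκ : 0 < κ)
    (w : ℕ → Ω → Fin d → ℝ) (hw : ∀ t, Measurable (w t))
    (hindep : iIndepFun w P)
    (f : (Fin d → ℝ) → ℝ)
    (hlaw : ∀ t, P.map (w t) = volume.withDensity fun x => ENNReal.ofReal (f x))
    (hfW : ∀ x ∈ W, κ ≤ f x)
    (M : Matrix (Fin d) (Fin d) ℝ) (hM : M ≠ 0)
    (Z : ℕ → Ω → Fin d → ℝ)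
    (hZ0 : ∃ c, ∀ ω, Z 0 ω = c)
    (hZ : ∀ k, 1 ≤ k →
      Measurable[⨆ i ∈ Finset.range (2 * k), MeasurableSpace.comap (w i)
        inferInstance] (Z k)) :
    ∀ᵐ ω ∂P,
      {k : ℕ | M.mulVec (w (2 * k) ω) + w (2 * k + 1) ω + Z k ω ∉ W}.Infinite := by
  set ν := volume.withDensity fun x => ENNReal.ofReal (f x)
  have : IsProbabilityMeasure ν := hlaw 0 ▸ Measure.isProbabilityMeasure_map (hw 0).aemeasurable
  have hν U (hU : IsOpen U) (hUW : (U ∩ W).Nonempty) : 0 < ν U :=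
    withDensity_pos_of_isOpen volume hWconv hWint hκ hfW hU hUW
  obtain ⟨δ, hδ, hfit⟩ := exists_forall_measure_prod_setOf_add_mem_le ν ν hWc hWint hν hν
    (T := LinearMap.toContinuousLinearMap (Matrix.toLin' M)) (by simpa using hM)
  have hZpast : ∀ k, Measurable[pastSigma w (2 * k)] (Z k) := by
    rintro (_ | k)
    · obtain ⟨c, hc⟩ := hZ0
      exact funext hc ▸ measurable_const
    · exact hZ (k + 1) (by omega)
  set S : Set ((Fin d → ℝ) × (Fin d → ℝ) × (Fin d → ℝ)) :=
    {q | M.mulVec q.2.1 + q.2.2 + q.1 ∈ W}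
  have hS : MeasurableSet S :=
    hWc.isClosed.measurableSet.preimage (Continuous.measurable (by fun_prop))
  refine ae_infinite_setOf_notMem (ℱ := fun k => pastSigma w (2 * k))
    (G := fun k => {ω | (Z k ω, w (2 * k) ω, w (2 * k + 1) ω) ∈ S})
    (fun _ _ hab => pastSigma_mono (by omega)) (fun k => ?_)
    (ENNReal.sub_lt_self ENNReal.one_ne_top one_ne_zero hδ.ne')
    (fun k B hB => measure_inter_mem_le_of_iIndepFun hw hindep hlaw (2 * k) (hZpast k) hS
      hfit hB)
  exact ((hZpast k).mono (pastSigma_mono (by omega)) le_rfl).prodMk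
    ((measurable_pastSigma (by omega)).prodMk (measurable_pastSigma (by omega))) hS

theorem residual_misfits_infinitely_often
    {Ω : Type*} [MeasurableSpace Ω] (P : Measure Ω) [IsProbabilityMeasure P]
    (d : ℕ) (hd : 1 ≤ d) (W : Set (Fin d → ℝ))
    (hWc : IsCompact W) (hWconv : Convex ℝ W) (hWint : (interior W).Nonempty)
    (κ : ℝ) (hκ : 0 < κ)
    (w : ℕ → Ω → Fin d → ℝ) (hw : ∀ t, Measurable (w t))
    (hindep : iIndepFun w P)
    (f : (Fin d → ℝ) → ℝ)
    (hlaw : ∀ t, P.map (w t) = volume.withDensity fun x => ENNReal.ofReal (f x))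
    (hfW : ∀ x ∈ W, κ ≤ f x) (hf0 : ∀ x ∉ W, f x = 0)
    (M : Matrix (Fin d) (Fin d) ℝ) (hM : M ≠ 0)
    (Z : ℕ → Ω → Fin d → ℝ)
    (hZ0 : ∃ c, ∀ ω, Z 0 ω = c)
    (hZ : ∀ k, 1 ≤ k →
      Measurable[⨆ i ∈ Finset.range (2 * k), MeasurableSpace.comap (w i)
        inferInstance] (Z k)) :
    ∀ᵐ ω ∂P,
      {k : ℕ | M.mulVec (w (2 * k) ω) + w (2 * k + 1) ω + Z k ω ∉ W}.Infinite :=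
  residual_misfits_infinitely_often_general P d W hWc hWconv hWint κ hκ w hw hindep f hlaw hfW M hM
    Z hZ0 hZ
end

section
/- Let q ≥ 1, let s ∈ {1,…,q}, and let ρ : {1,…,q} → ℝ satisfy ρ(s) < 1 and ρ(p) > 1 for all p ≠ s. For each p let r_p : ℕ → ℝ be a sequence of estimates with r_p(n) → ρ(p) as n → ∞. Let σ : ℕ → {1,…,q} be a selection sequence and define the pull counts N_p(t) = #{τ < t : σ(τ) = p}. Assume the greedy property: for every t, if there exists p with r_p(N_p(t)) < 1 then r_{σ(t)}(N_{σ(t)}(t)) < 1. Assume also the exploration fairness property: if the set T = {t : r_p(N_p(t)) ≥ 1 for all p} is infinite, then for every p the set {t ∈ T : σ(t) = p} is infinite. Then {t : σ(t) = s} is infinite, and for every p ≠ s the set {t : σ(t) = p} is finite. -/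
/-!
Once an arm is pulled infinitely often, its pull count tends to infinity, so its running
estimate converges to its true spectral radius. If the times at which every arm looks unstable
were infinitely many, fairness would make the stable arm `s` pulled infinitely often, and its
estimate would eventually drop below `1`, contradicting those times. So from some time on some
arm looks stable, and greedily the selected arm looks stable too; an unstable arm pulled
infinitely often would eventually look unstable whenever selected, so every unstable arm is
pulled finitely often, and by pigeonhole `s` is pulled infinitely often.
-/

open Filter Topology

theorem Nat.tendsto_count_atTop {p : ℕ → Prop} [DecidablePred p] (hp : (Set.ofPred p).Infinite) :
    Tendsto (Nat.count p) atTop atTop := by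
  refine tendsto_atTop_atTop.2 fun b => ⟨Nat.nth p b + 1, fun t ht => ?_⟩
  have hb : Nat.count p (Nat.nth p b + 1) = b + 1 := Nat.count_nth_succ_of_infinite hp b
  have := Nat.count_monotone p ht
  omega

theorem Finite.infinite_fiber_of_finite_fiber_ne {α β : Type*} [Infinite α] [Finite β]
    (f : α → β) (b : β) (h : ∀ c, c ≠ b → (f ⁻¹' {c}).Finite) : (f ⁻¹' {b}).Infinite := by
  obtain ⟨c, hc⟩ := Finite.exists_infinite_fiber f
  obtain rfl : c = b := by_contra fun hcb => (h c hcb).not_infinite (Set.infinite_coe_iff.1 hc)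
  exact Set.infinite_coe_iff.1 hc

namespace Bandit

variable {ι : Type*} [DecidableEq ι] {σ : ℕ → ι} {r : ι → ℕ → ℝ} {ρ : ι → ℝ}

/-- The paper's `N_p(t)`: pulls of arm `p` at times `τ < t`. -/
def pullCount (σ : ℕ → ι) (p : ι) (t : ℕ) : ℕ := Nat.count (fun τ => σ τ = p) t

/-- The paper's exploration set `T`. -/
def explorationTimes (σ : ℕ → ι) (r : ι → ℕ → ℝ) : Set ℕ :=
  {t | ∀ p, 1 ≤ r p (pullCount σ p t)}

theorem tendsto_estimate_of_infinite {p : ι} (hr : Tendsto (r p) atTop (𝓝 (ρ p)))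
    (hp : {t | σ t = p}.Infinite) :
    Tendsto (fun t => r p (pullCount σ p t)) atTop (𝓝 (ρ p)) :=
  hr.comp (Nat.tendsto_count_atTop hp)

theorem finite_explorationTimes {s : ι} (hs : ρ s < 1) (hr : Tendsto (r s) atTop (𝓝 (ρ s)))
    (hfair : (explorationTimes σ r).Infinite → {t | t ∈ explorationTimes σ r ∧ σ t = s}.Infinite) :
    (explorationTimes σ r).Finite := by
  by_contra hT
  rw [Set.not_finite] at hT
  have hpulled : {t | σ t = s}.Infinite := (hfair hT).mono fun t ht => ht.2
  have hstable : ∀ᶠ t in atTop, r s (pullCount σ s t) < 1 :=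
    (tendsto_estimate_of_infinite hr hpulled).eventually_lt_const hs
  obtain ⟨t, ht, hlt⟩ := ((Nat.frequently_atTop_iff_infinite.2 hT).and_eventually hstable).exists
  exact (ht s).not_gt hlt

theorem eventually_selected_estimate_lt_one
    (hgreedy : ∀ t, (∃ p, r p (pullCount σ p t) < 1) → r (σ t) (pullCount σ (σ t) t) < 1)
    (hT : (explorationTimes σ r).Finite) :
    ∀ᶠ t in atTop, r (σ t) (pullCount σ (σ t) t) < 1 := by
  rw [← Nat.cofinite_eq_atTop]
  filter_upwards [hT.eventually_cofinite_notMem] with t ht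
  simp only [explorationTimes, Set.mem_ofPred_eq, not_forall, not_le] at ht
  exact hgreedy t ht

theorem finite_setOf_eq_of_one_lt {p : ι} (hp : 1 < ρ p) (hr : Tendsto (r p) atTop (𝓝 (ρ p)))
    (hselected : ∀ᶠ t in atTop, r (σ t) (pullCount σ (σ t) t) < 1) :
    {t | σ t = p}.Finite := by
  by_contra hinf
  rw [Set.not_finite] at hinf
  have hunstable : ∀ᶠ t in atTop, 1 < r p (pullCount σ p t) :=
    (tendsto_estimate_of_infinite hr hinf).eventually_const_lt hp
  obtain ⟨t, rfl, hlt, hgt⟩ :=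
    ((Nat.frequently_atTop_iff_infinite.2 hinf).and_eventually (hselected.and hunstable)).exists
  exact hlt.not_gt hgt

end Bandit

open Bandit in
theorem greedy_bandit_selects_stable_arm_general
    (q : ℕ) (s : Fin q) (ρ : Fin q → ℝ)
    (hs : ρ s < 1) (hunstable : ∀ p : Fin q, p ≠ s → 1 < ρ p)
    (r : Fin q → ℕ → ℝ)
    (hr : ∀ p, Tendsto (r p) atTop (nhds (ρ p)))
    (σ : ℕ → Fin q) (N : Fin q → ℕ → ℕ)
    (hN : ∀ p t, N p t = ((Finset.range t).filter fun τ => σ τ = p).card)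
    (hgreedy : ∀ t, (∃ p, r p (N p t) < 1) → r (σ t) (N (σ t) t) < 1)
    (hfair : {t : ℕ | ∀ p, 1 ≤ r p (N p t)}.Infinite →
      ∀ p, {t : ℕ | (∀ p', 1 ≤ r p' (N p' t)) ∧ σ t = p}.Infinite) :
    {t : ℕ | σ t = s}.Infinite ∧
      ∀ p : Fin q, p ≠ s → {t : ℕ | σ t = p}.Finite := by
  obtain rfl : N = pullCount σ := funext₂ fun p t => by
    rw [hN, pullCount, Nat.count_eq_card_filter_range]
  have hT := finite_explorationTimes hs (hr s) fun hT => hfair hT s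
  have hselected := eventually_selected_estimate_lt_one hgreedy hT
  have hfinite (p : Fin q) (hp : p ≠ s) : {t | σ t = p}.Finite :=
    finite_setOf_eq_of_one_lt (hunstable p hp) (hr p) hselected
  exact ⟨Finite.infinite_fiber_of_finite_fiber_ne σ s hfinite, hfinite⟩

theorem greedy_bandit_selects_stable_arm
    (q : ℕ) (hq : 1 ≤ q) (s : Fin q) (ρ : Fin q → ℝ)
    (hs : ρ s < 1) (hunstable : ∀ p : Fin q, p ≠ s → 1 < ρ p)
    (r : Fin q → ℕ → ℝ)
    (hr : ∀ p, Tendsto (r p) atTop (nhds (ρ p)))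
    (σ : ℕ → Fin q) (N : Fin q → ℕ → ℕ)
    (hN : ∀ p t, N p t = ((Finset.range t).filter fun τ => σ τ = p).card)
    (hgreedy : ∀ t, (∃ p, r p (N p t) < 1) → r (σ t) (N (σ t) t) < 1)
    (hfair : {t : ℕ | ∀ p, 1 ≤ r p (N p t)}.Infinite →
      ∀ p, {t : ℕ | (∀ p', 1 ≤ r p' (N p' t)) ∧ σ t = p}.Infinite) :
    {t : ℕ | σ t = s}.Infinite ∧
      ∀ p : Fin q, p ≠ s → {t : ℕ | σ t = p}.Finite :=
  greedy_bandit_selects_stable_arm_general q s ρ hs hunstable r hr σ N hN hgreedy hfair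
end
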